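/- Let m, n ≥ 0 and let f : ℝ² → ℍ be integrable and have partial derivatives in the L¹ norm of all orders ≤ m+n, with g = ∂^{m+n} f / (∂s^m ∂t^n) denoting the iterated L¹-norm partial derivative (m times in the first variable and n times in the second). Then the two-sided quaternion Fourier transforms satisfy 𝓖_T(u,v) = (i u)^m 𝓕_T(u,v) (j v)^n for all (u,v) ∈ ℝ². -/

import Mathlib

open MeasureTheory Filter Real Set
open scoped Quaternion Topology

noncomputable section

def qi : ℍ[ℝ] := ⟨0,1,0,0⟩
def qj : ℍ[ℝ] := ⟨0,0,1,0⟩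

/-- `e^{μθ} = cos θ + μ sin θ` for a (pure unit) quaternion `μ`. -/
def qexp (μ : ℍ[ℝ]) (θ : ℝ) : ℍ[ℝ] := (Real.cos θ : ℍ[ℝ]) + Real.sin θ • μ

/-- Two-sided quaternion Fourier transform. -/
def QFT_T (f : ℝ × ℝ → ℍ[ℝ]) (u v : ℝ) : ℍ[ℝ] :=
  ∫ p : ℝ × ℝ, qexp qi (-(u * p.1)) * f p * qexp qj (-(v * p.2))


/-- `g` is the partial derivative of `f` with respect to the first variable in the `L¹` norm. -/
def L1PartialDerivS (f g : ℝ × ℝ → ℍ[ℝ]) : Prop :=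
  Tendsto (fun h : ℝ => ∫ p : ℝ × ℝ, ‖h⁻¹ • (f (p.1 + h, p.2) - f p) - g p‖)
    (𝓝[≠] (0:ℝ)) (𝓝 0)

/-- `g` is the partial derivative of `f` with respect to the second variable in the `L¹` norm. -/
def L1PartialDerivT (f g : ℝ × ℝ → ℍ[ℝ]) : Prop :=
  Tendsto (fun h : ℝ => ∫ p : ℝ × ℝ, ‖h⁻¹ • (f (p.1, p.2 + h) - f p) - g p‖)
    (𝓝[≠] (0:ℝ)) (𝓝 0)

/-- `D` is a family of iterated `L¹`-norm partial derivatives of `f` of all total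
orders `≤ N`, with `D k l` the derivative taken `k` times in `s` and `l` times in `t`. -/
def HasL1DerivsUpTo (N : ℕ) (f : ℝ × ℝ → ℍ[ℝ]) (D : ℕ → ℕ → (ℝ × ℝ → ℍ[ℝ])) : Prop :=
  D 0 0 = f ∧
  (∀ k l : ℕ, k + l ≤ N → Integrable (D k l)) ∧
  (∀ k l : ℕ, k + 1 + l ≤ N → L1PartialDerivS (D k l) (D (k + 1) l)) ∧
  (∀ k l : ℕ, k + l + 1 ≤ N → L1PartialDerivT (D k l) (D k (l + 1)))


/-! Translating `f` by `a` multiplies `𝓕_T f (u, v)` by `e^{i u a₁}` on the left and by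
`e^{j v a₂}` on the right. Since `‖𝓕_T F‖ ≤ ‖F‖₁`, the `L¹`-convergent difference quotients of `f`
in a direction `w` are carried to the difference quotients of
`h ↦ e^{i u w₁ h} 𝓕_T f e^{j v w₂ h}` at `0`, whose limit is `(i u w₁) 𝓕_T f + 𝓕_T f (j v w₂)`.
The directions `(1, 0)` and `(0, 1)` and an induction on the orders give the theorem. -/

section qexp

variable {μ : ℍ[ℝ]}

lemma qexp_eq_smul_one (μ : ℍ[ℝ]) (θ : ℝ) : qexp μ θ = Real.cos θ • 1 + Real.sin θ • μ := by
  simp [qexp, Algebra.smul_def]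

@[simp]
lemma qexp_zero (μ : ℍ[ℝ]) : qexp μ 0 = 1 := by
  simp [qexp]

lemma qexp_add (hμ : μ * μ = -1) (a b : ℝ) : qexp μ (a + b) = qexp μ a * qexp μ b := by
  simp only [qexp_eq_smul_one, add_mul, mul_add, smul_mul_smul_comm, one_mul, mul_one, hμ,
    Real.cos_add, Real.sin_add]
  module

lemma star_qexp (hμ : star μ = -μ) (θ : ℝ) : star (qexp μ θ) = qexp μ (-θ) := by
  simp [qexp, hμ]

lemma norm_qexp (hμ : μ * μ = -1) (hμ' : star μ = -μ) (θ : ℝ) : ‖qexp μ θ‖ = 1 := by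
  have h : Quaternion.normSq (qexp μ θ) = 1 := by
    rw [← Quaternion.coe_inj, ← Quaternion.self_mul_star, star_qexp hμ', ← qexp_add hμ,
      add_neg_cancel, qexp_zero, Quaternion.coe_one]
  rw [Quaternion.normSq_eq_norm_mul_self] at h
  nlinarith [norm_nonneg (qexp μ θ)]

lemma continuous_qexp (μ : ℍ[ℝ]) : Continuous (qexp μ) := by
  simp_rw [funext (qexp_eq_smul_one μ)]
  fun_prop

lemma hasDerivAt_qexp_zero (μ : ℍ[ℝ]) : HasDerivAt (qexp μ) μ 0 := by
  simp_rw [funext (qexp_eq_smul_one μ)]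
  exact (((Real.hasDerivAt_cos 0).smul_const (1 : ℍ[ℝ])).fun_add
    ((Real.hasDerivAt_sin 0).smul_const μ)).congr_deriv (by simp)

lemma hasDerivAt_qexp_mul_zero (μ : ℍ[ℝ]) (c : ℝ) :
    HasDerivAt (fun h => qexp μ (c * h)) (c • μ) 0 := by
  have h := (hasDerivAt_qexp_zero μ).scomp_of_eq 0 ((hasDerivAt_id' 0).const_mul c)
    (mul_zero c).symm
  rwa [mul_one] at h

end qexp

lemma qi_mul_qi : qi * qi = -1 := by ext <;> simp <;> simp [qi]
lemma star_qi : star qi = -qi := by ext <;> simp; simp [qi]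
lemma qj_mul_qj : qj * qj = -1 := by ext <;> simp <;> simp [qj]
lemma star_qj : star qj = -qj := by ext <;> simp; simp [qj]

lemma norm_qexp_qi_mul_mul_qexp_qj (a b : ℝ) (x : ℍ[ℝ]) : ‖qexp qi a * x * qexp qj b‖ = ‖x‖ := by
  rw [norm_mul, norm_mul, norm_qexp qi_mul_qi star_qi, norm_qexp qj_mul_qj star_qj, one_mul,
    mul_one]

section QFT

variable {F G : ℝ × ℝ → ℍ[ℝ]} (u v : ℝ)

lemma integrable_QFT_T_integrand (hF : Integrable F) :
    Integrable (fun p : ℝ × ℝ => qexp qi (-(u * p.1)) * F p * qexp qj (-(v * p.2))) := by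
  refine hF.norm.mono' ?_ (.of_forall fun p => (norm_qexp_qi_mul_mul_qexp_qj _ _ _).le)
  have hi : Continuous fun p : ℝ × ℝ => qexp qi (-(u * p.1)) :=
    (continuous_qexp qi).comp (by fun_prop)
  have hj : Continuous fun p : ℝ × ℝ => qexp qj (-(v * p.2)) :=
    (continuous_qexp qj).comp (by fun_prop)
  exact (hi.aestronglyMeasurable.mul hF.1).mul hj.aestronglyMeasurable

lemma norm_QFT_T_le (F : ℝ × ℝ → ℍ[ℝ]) : ‖QFT_T F u v‖ ≤ ∫ p, ‖F p‖ :=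
  (norm_integral_le_integral_norm _).trans_eq (by simp_rw [norm_qexp_qi_mul_mul_qexp_qj])

lemma QFT_T_sub (hF : Integrable F) (hG : Integrable G) :
    QFT_T (F - G) u v = QFT_T F u v - QFT_T G u v := by
  simp only [QFT_T, Pi.sub_apply, mul_sub, sub_mul]
  exact integral_sub (integrable_QFT_T_integrand u v hF) (integrable_QFT_T_integrand u v hG)

lemma QFT_T_smul (c : ℝ) (F : ℝ × ℝ → ℍ[ℝ]) : QFT_T (c • F) u v = c • QFT_T F u v := by
  simp only [QFT_T, Pi.smul_apply, mul_smul_comm, smul_mul_assoc]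
  exact integral_smul c _

lemma QFT_T_comp_add_right (hF : Integrable F) (a : ℝ × ℝ) :
    QFT_T (fun p => F (p + a)) u v = qexp qi (u * a.1) * QFT_T F u v * qexp qj (v * a.2) := by
  set K := fun p : ℝ × ℝ => qexp qi (-(u * p.1)) * F p * qexp qj (-(v * p.2))
  have hK : Integrable fun p => K (p + a) := (integrable_QFT_T_integrand u v hF).comp_add_right a
  have hshift (p : ℝ × ℝ) : qexp qi (-(u * p.1)) * F (p + a) * qexp qj (-(v * p.2)) =
      qexp qi (u * a.1) * K (p + a) * qexp qj (v * a.2) := by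
    have hi : qexp qi (-(u * p.1)) = qexp qi (u * a.1) * qexp qi (-(u * (p + a).1)) := by
      rw [← qexp_add qi_mul_qi, Prod.fst_add]; ring_nf
    have hj : qexp qj (-(v * p.2)) = qexp qj (-(v * (p + a).2)) * qexp qj (v * a.2) := by
      rw [← qexp_add qj_mul_qj, Prod.snd_add]; ring_nf
    simp only [K, hi, hj, mul_assoc]
  calc QFT_T (fun p => F (p + a)) u v
      = ∫ p, qexp qi (u * a.1) * K (p + a) * qexp qj (v * a.2) := by simp_rw [QFT_T, hshift]
    _ = qexp qi (u * a.1) * (∫ p, K (p + a)) * qexp qj (v * a.2) := by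
      rw [integral_mul_const_of_integrable (hK.const_mul _), integral_const_mul_of_integrable hK]
    _ = qexp qi (u * a.1) * QFT_T F u v * qexp qj (v * a.2) := by
      rw [integral_add_right_eq_self K a]
      rfl

lemma tendsto_QFT_T_of_tendsto_integral_norm_sub {ι : Type*} {l : Filter ι}
    {F : ι → ℝ × ℝ → ℍ[ℝ]} (hF : ∀ i, Integrable (F i)) (hG : Integrable G)
    (hFG : Tendsto (fun i => ∫ p, ‖F i p - G p‖) l (𝓝 0)) :
    Tendsto (fun i => QFT_T (F i) u v) l (𝓝 (QFT_T G u v)) := by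
  rw [tendsto_iff_norm_sub_tendsto_zero]
  refine squeeze_zero (fun _ => norm_nonneg _) (fun i => ?_) hFG
  rw [← QFT_T_sub u v (hF i) hG]
  exact norm_QFT_T_le u v _

end QFT

def HasL1LineDeriv (f g : ℝ × ℝ → ℍ[ℝ]) (w : ℝ × ℝ) : Prop :=
  Tendsto (fun h : ℝ => ∫ p : ℝ × ℝ, ‖h⁻¹ • (f (p + h • w) - f p) - g p‖) (𝓝[≠] 0) (𝓝 0)

section HasL1LineDeriv

variable {f g : ℝ × ℝ → ℍ[ℝ]} (u v : ℝ)

lemma L1PartialDerivS.hasL1LineDeriv (hfg : L1PartialDerivS f g) : HasL1LineDeriv f g (1, 0) := by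
  have hshift (p : ℝ × ℝ) (h : ℝ) : p + h • ((1 : ℝ), (0 : ℝ)) = (p.1 + h, p.2) := by
    ext <;> simp
  simp only [HasL1LineDeriv, hshift]
  exact hfg

lemma L1PartialDerivT.hasL1LineDeriv (hfg : L1PartialDerivT f g) : HasL1LineDeriv f g (0, 1) := by
  have hshift (p : ℝ × ℝ) (h : ℝ) : p + h • ((0 : ℝ), (1 : ℝ)) = (p.1, p.2 + h) := by
    ext <;> simp
  simp only [HasL1LineDeriv, hshift]
  exact hfg

lemma HasL1LineDeriv.QFT_T_eq {w : ℝ × ℝ} (hfg : HasL1LineDeriv f g w) (hf : Integrable f)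
    (hg : Integrable g) :
    QFT_T g u v = (u * w.1) • qi * QFT_T f u v + QFT_T f u v * (v * w.2) • qj := by
  set X := QFT_T f u v with hX
  set E : ℝ → ℍ[ℝ] := fun h => qexp qi (u * w.1 * h) * X * qexp qj (v * w.2 * h)
  have hE : HasDerivAt E ((u * w.1) • qi * X + X * (v * w.2) • qj) 0 := by
    simpa [E] using ((hasDerivAt_qexp_mul_zero qi (u * w.1)).mul_const X).fun_mul
      (hasDerivAt_qexp_mul_zero qj (v * w.2))
  have hquot (h : ℝ) :
      QFT_T (fun p => h⁻¹ • (f (p + h • w) - f p)) u v = h⁻¹ • (E (0 + h) - E 0) := by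
    rw [show (fun p => h⁻¹ • (f (p + h • w) - f p)) = h⁻¹ • ((fun p => f (p + h • w)) - f) from
      rfl, QFT_T_smul, QFT_T_sub u v (hf.comp_add_right _) hf, QFT_T_comp_add_right u v hf]
    simp [E, hX, mul_comm, mul_left_comm]
  have hlim := tendsto_QFT_T_of_tendsto_integral_norm_sub u v
    (fun h => ((hf.comp_add_right (h • w)).sub hf).smul h⁻¹) hg hfg
  exact tendsto_nhds_unique (hlim.congr hquot) hE.tendsto_slope_zero

lemma L1PartialDerivS.QFT_T_eq (hfg : L1PartialDerivS f g) (hf : Integrable f)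
    (hg : Integrable g) : QFT_T g u v = u • qi * QFT_T f u v := by
  simpa using hfg.hasL1LineDeriv.QFT_T_eq u v hf hg

lemma L1PartialDerivT.QFT_T_eq (hfg : L1PartialDerivT f g) (hf : Integrable f)
    (hg : Integrable g) : QFT_T g u v = QFT_T f u v * v • qj := by
  simpa using hfg.hasL1LineDeriv.QFT_T_eq u v hf hg

end HasL1LineDeriv

lemma HasL1DerivsUpTo.QFT_T_eq {N : ℕ} {f : ℝ × ℝ → ℍ[ℝ]} {D : ℕ → ℕ → ℝ × ℝ → ℍ[ℝ]}
    (hD : HasL1DerivsUpTo N f D) (u v : ℝ) {k l : ℕ} (hkl : k + l ≤ N) :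
    QFT_T (D k l) u v = (u • qi) ^ k * QFT_T f u v * (v • qj) ^ l := by
  obtain ⟨rfl, hint, hS, hT⟩ := hD
  induction k with
  | zero =>
    induction l with
    | zero => simp
    | succ l ih =>
      rw [(hT 0 l (by omega)).QFT_T_eq u v (hint _ _ (by omega)) (hint _ _ (by omega)),
        ih (by omega), pow_succ, mul_assoc]
  | succ k ih =>
    rw [(hS k l (by omega)).QFT_T_eq u v (hint _ _ (by omega)) (hint _ _ (by omega)),
      ih (by omega), pow_succ', mul_assoc, mul_assoc, mul_assoc]

theorem qft_two_sided_iterated_deriv_general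
    (m n : ℕ) (f : ℝ × ℝ → ℍ[ℝ])
    (D : ℕ → ℕ → (ℝ × ℝ → ℍ[ℝ])) (hD : HasL1DerivsUpTo (m + n) f D) :
    ∀ u v : ℝ, QFT_T (D m n) u v = (u • qi) ^ m * QFT_T f u v * (v • qj) ^ n :=
  fun u v => hD.QFT_T_eq u v le_rfl

/-- The two-sided QFT of the iterated `L¹`-norm partial derivative
`∂^{m+n} f/(∂s^m ∂t^n)` equals `(iu)^m 𝓕_T(u,v) (jv)^n`. -/
theorem qft_two_sided_iterated_deriv
    (m n : ℕ) (f : ℝ × ℝ → ℍ[ℝ]) (hf : Integrable f)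
    (D : ℕ → ℕ → (ℝ × ℝ → ℍ[ℝ])) (hD : HasL1DerivsUpTo (m + n) f D) :
    ∀ u v : ℝ, QFT_T (D m n) u v = (u • qi) ^ m * QFT_T f u v * (v • qj) ^ n :=
  qft_two_sided_iterated_deriv_general m n f D hD
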